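/- arXiv:2304.03985 — 4 statements merged into one kernel-verified Lean document; each statement's English description precedes it below -/
import Mathlib

section
/- A permutation σ ∈ S_n is a skew permutation (i.e., the tree permutation of some full skew tree with n internal nodes) if and only if for every i ∈ [n], σ(i) = min{σ(i), σ(i+1), ..., σ(n)} or σ(i) = max{σ(i), σ(i+1), ..., σ(n)}. -/
/-- Full binary trees: every node is a leaf or has exactly two children.
`node l r` is an internal node with left subtree `l` and right subtree `r`. -/
inductive FBT : Type
  | leaf : FBT
  | node : FBT → FBT → FBT
  deriving DecidableEq

namespace FBT

/-- Number of internal nodes. -/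
def internal : FBT → ℕ
  | leaf => 0
  | node l r => internal l + internal r + 1

/-- Height: maximum number of internal nodes on a root-to-leaf path. -/
def height : FBT → ℕ
  | leaf => 0
  | node l r => max (height l) (height r) + 1

/-- Rank of a full binary tree (Ehrenfeucht–Haussler rank). -/
def rank : FBT → ℕ
  | leaf => 0
  | node l r => if rank l = rank r then rank l + 1 else max (rank l) (rank r)

/-- A full binary tree is skew if every internal node has at least one leaf child. -/
def skew : FBT → Prop
  | leaf => True
  | node l r => (l = leaf ∨ r = leaf) ∧ skew l ∧ skew r

/-- Pre-order traversal of the internal nodes, labeled by the in-order labeling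
(1-indexed); `off` is the number of in-order labels used strictly to the left
of this subtree.  `T.preorderAux 0` is the tree permutation of `T`, as a list. -/
def preorderAux : FBT → ℕ → List ℕ
  | leaf, _ => []
  | node l r, off =>
      (off + internal l + 1) :: (preorderAux l off ++ preorderAux r (off + internal l + 1))

/-- Number of internal nodes on the rightmost root-to-leaf path. -/
def rightPath : FBT → ℕ
  | leaf => 0
  | node _ r => rightPath r + 1

end FBT

/-- One (left or right) rotation, performed at some node of the tree. -/
inductive Rot : FBT → FBT → Prop
  | rotR (C D E : FBT) : Rot (FBT.node (FBT.node C D) E) (FBT.node C (FBT.node D E))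
  | rotL (C D E : FBT) : Rot (FBT.node C (FBT.node D E)) (FBT.node (FBT.node C D) E)
  | congrL {l l' : FBT} (r : FBT) : Rot l l' → Rot (FBT.node l r) (FBT.node l' r)
  | congrR {r r' : FBT} (l : FBT) : Rot r r' → Rot (FBT.node l r) (FBT.node l r')

/-- `RotChainP P k T1 T2`: there is a sequence of `k` rotations transforming `T1`
into `T2` in which every tree reached along the way satisfies `P`. -/
def RotChainP (P : FBT → Prop) : ℕ → FBT → FBT → Prop
  | 0, T1, T2 => T1 = T2
  | k+1, T1, T2 => ∃ T, Rot T1 T ∧ P T ∧ RotChainP P k T T2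

/-- `RotChain k T1 T2`: `T1` can be transformed into `T2` by `k` rotations. -/
def RotChain : ℕ → FBT → FBT → Prop := RotChainP fun _ => True

/-- The rotation distance between two full binary trees. -/
noncomputable def rotDist (T1 T2 : FBT) : ℕ := sInf {k | RotChain k T1 T2}

/-- The right comb on `n` internal nodes. -/
def rightComb : ℕ → FBT
  | 0 => FBT.leaf
  | n+1 => FBT.node FBT.leaf (rightComb n)

/-- The left comb on `n` internal nodes. -/
def leftComb : ℕ → FBT
  | 0 => FBT.leaf
  | n+1 => FBT.node (leftComb n) FBT.leaf

/-- The complete binary tree of height `r`. -/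
def completeTree : ℕ → FBT
  | 0 => FBT.leaf
  | r+1 => FBT.node (completeTree r) (completeTree r)

/-- Replace the leftmost leaf of the first tree by the second tree. -/
def attachLeftmost : FBT → FBT → FBT
  | FBT.leaf, S => S
  | FBT.node l r, S => FBT.node (attachLeftmost l S) r

/-- The transposition `δ_{i,j,k}` (1-indexed, `1 ≤ i < j < k`) applied to a list:
the consecutive blocks occupying positions `i..j-1` and `j..k-1` are swapped,
all other positions are left fixed. -/
def transposeList (i j k : ℕ) (l : List ℕ) : List ℕ :=
  l.take (i-1) ++ (l.drop (j-1)).take (k-j) ++ (l.drop (i-1)).take (j-i) ++ l.drop (k-1)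

/-- `δ_{i,j,k}` is a tree transposition (on permutations of `n` elements): there are
full binary trees `T1, T2` with `n` internal nodes each, at rotation distance `1`,
whose tree permutations `σ, τ` satisfy `δ_{i,j,k}(σ) = τ`. -/
def IsTreeTransposition (n i j k : ℕ) : Prop :=
  ∃ T1 T2 : FBT, T1.internal = n ∧ T2.internal = n ∧ rotDist T1 T2 = 1 ∧
    transposeList i j k (T1.preorderAux 0) = T2.preorderAux 0

/-- `σ` (a permutation of `Fin n`) is a tree permutation: the pre-order traversal of
some full binary tree with `n` internal nodes under the in-order labeling.
(Positions and values are converted to 1-indexed labels.) -/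
def IsTreePerm (n : ℕ) (σ : Equiv.Perm (Fin n)) : Prop :=
  ∃ T : FBT, T.internal = n ∧ T.preorderAux 0 = List.ofFn fun i => (σ i : ℕ) + 1

/-- `σ` is a skew permutation: the tree permutation of some full skew tree. -/
def IsSkewPerm (n : ℕ) (σ : Equiv.Perm (Fin n)) : Prop :=
  ∃ T : FBT, T.internal = n ∧ T.skew ∧ T.preorderAux 0 = List.ofFn fun i => (σ i : ℕ) + 1

/-- `SkewSim σ τ` (written `σ ∼ τ` in the paper): `τ` is obtained from `σ` (lists,
0-indexed) by a skew transposition: for some position `i`, `σ(i)` and `σ(i+1)` are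
respectively the min and the max (or the max and the min) of the suffix starting at
position `i`, and `τ` is `σ` with the entries at positions `i` and `i+1` swapped. -/
def SkewSim (σ τ : List ℕ) : Prop :=
  ∃ i : ℕ, i + 1 < σ.length ∧
    (((∀ x ∈ σ.drop i, σ.getD i 0 ≤ x) ∧ (∀ x ∈ σ.drop i, x ≤ σ.getD (i+1) 0)) ∨
     ((∀ x ∈ σ.drop i, x ≤ σ.getD i 0) ∧ (∀ x ∈ σ.drop i, σ.getD (i+1) 0 ≤ x))) ∧
    τ = σ.take i ++ [σ.getD (i+1) 0, σ.getD i 0] ++ σ.drop (i+2)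

/-- The tree polynomial of a full binary tree: the sum over all leaves of `x^a y^b`,
where `a` (resp. `b`) is the number of left (resp. right) edges on the root-to-leaf
path.  `X 0` plays the role of `x` and `X 1` the role of `y`. -/
noncomputable def treePoly : FBT → MvPolynomial (Fin 2) ℕ
  | FBT.leaf => 1
  | FBT.node l r => MvPolynomial.X 0 * treePoly l + MvPolynomial.X 1 * treePoly r


/-! A skew tree's root has a leaf child, so it is the first or the last node of its subtree in
in-order: its label is the minimum or the maximum of the labels of the subtree, and these are
exactly the entries that follow it in pre-order. Conversely, an arrangement of an interval of
labels in which every entry is extremal in its suffix is the pre-order of the skew tree whose root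
is the head, with a leaf on the side of the head's extreme and the tree of the tail, built
recursively, on the other side. -/

namespace List

variable {α : Type*}

def SuffixExtremal [LE α] : List α → Prop
  | [] => True
  | a :: t => ((∀ x ∈ t, a ≤ x) ∨ (∀ x ∈ t, x ≤ a)) ∧ SuffixExtremal t

theorem suffixExtremal_ofFn_iff [Preorder α] {n : ℕ} (f : Fin n → α) :
    SuffixExtremal (ofFn f) ↔
      ∀ i, (∀ j, i ≤ j → f i ≤ f j) ∨ (∀ j, i ≤ j → f j ≤ f i) := by
  induction n with
  | zero => simp [SuffixExtremal]
  | succ n ih =>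
    rw [ofFn_succ, SuffixExtremal, ih, Fin.forall_fin_succ]
    simp [Fin.forall_fin_succ, Fin.succ_le_succ_iff]

theorem head_eq_of_perm_range'_of_forall_le {a s m : ℕ} {t : List ℕ}
    (hperm : a :: t ~ range' s (m + 1)) (hmin : ∀ x ∈ t, a ≤ x) :
    a = s ∧ t ~ range' (s + 1) m := by
  have ha : a = s := by
    have hs : s ∈ a :: t := hperm.mem_iff.mpr (mem_range'_1.mpr (by omega))
    have ha_mem := mem_range'_1.mp (hperm.mem_iff.mp mem_cons_self)
    rcases mem_cons.mp hs with h | h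
    · exact h.symm
    · have := hmin s h; omega
  subst ha
  exact ⟨rfl, (hperm.trans (by rw [range'_succ])).cons_inv⟩

theorem head_eq_of_perm_range'_of_forall_ge {a s m : ℕ} {t : List ℕ}
    (hperm : a :: t ~ range' s (m + 1)) (hmax : ∀ x ∈ t, x ≤ a) :
    a = s + m ∧ t ~ range' s m := by
  have ha : a = s + m := by
    have hs : s + m ∈ a :: t := hperm.mem_iff.mpr (mem_range'_1.mpr (by omega))
    have ha_mem := mem_range'_1.mp (hperm.mem_iff.mp mem_cons_self)
    rcases mem_cons.mp hs with h | h
    · exact h.symm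
    · have := hmax _ h; omega
  subst ha
  refine ⟨rfl, (hperm.trans ?_).cons_inv⟩
  simp [range'_concat]

end List

namespace FBT

theorem mem_preorderAux {T : FBT} {off k : ℕ} (h : k ∈ T.preorderAux off) :
    off < k ∧ k ≤ off + T.internal := by
  induction T generalizing off with
  | leaf => simp [preorderAux] at h
  | node l r ihl ihr =>
    simp only [preorderAux, internal, List.mem_cons, List.mem_append] at h ⊢
    rcases h with h | h | h
    · omega
    · have := ihl h; omega
    · have := ihr h; omega

theorem skew.suffixExtremal_preorderAux {T : FBT} (h : T.skew) (off : ℕ) :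
    (T.preorderAux off).SuffixExtremal := by
  induction T generalizing off with
  | leaf => trivial
  | node l r ihl ihr =>
    obtain ⟨hleaf, hl, hr⟩ := h
    rcases hleaf with rfl | rfl
    · refine ⟨Or.inl fun x hx => ?_, by simpa [preorderAux] using ihr hr _⟩
      have := mem_preorderAux (T := r) (by simpa [preorderAux] using hx)
      omega
    · refine ⟨Or.inr fun x hx => ?_, by simpa [preorderAux] using ihl hl _⟩
      have := mem_preorderAux (T := l) (by simpa [preorderAux] using hx)
      omega

theorem exists_skew_preorderAux_eq {m off : ℕ} {L : List ℕ}
    (hperm : L.Perm (List.range' (off + 1) m)) (hL : L.SuffixExtremal) :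
    ∃ T : FBT, T.skew ∧ T.internal = m ∧ T.preorderAux off = L := by
  induction m generalizing off L with
  | zero =>
    obtain rfl : L = [] := List.eq_nil_of_length_eq_zero (by simpa using hperm.length_eq)
    exact ⟨leaf, trivial, rfl, rfl⟩
  | succ m ih =>
    obtain ⟨a, t, rfl⟩ : ∃ a t, L = a :: t :=
      List.exists_cons_of_length_pos (by simp [hperm.length_eq])
    obtain ⟨hmin | hmax, ht⟩ := hL
    · obtain ⟨rfl, htperm⟩ := List.head_eq_of_perm_range'_of_forall_le hperm hmin
      obtain ⟨R, hRskew, hRint, hRpre⟩ := ih htperm ht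
      exact ⟨node leaf R, ⟨Or.inl rfl, trivial, hRskew⟩, by simp [internal, hRint],
        by simp [preorderAux, internal, hRpre]⟩
    · obtain ⟨rfl, htperm⟩ := List.head_eq_of_perm_range'_of_forall_ge hperm hmax
      obtain ⟨R, hRskew, hRint, hRpre⟩ := ih htperm ht
      exact ⟨node R leaf, ⟨Or.inr rfl, hRskew, trivial⟩, by simp [internal, hRint],
        by simp [preorderAux, hRint, hRpre]; omega⟩

end FBT

theorem Equiv.Perm.ofFn_val_add_one_perm_range' {n : ℕ} (σ : Equiv.Perm (Fin n)) :
    (List.ofFn fun i => (σ i : ℕ) + 1).Perm (List.range' 1 n) := by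
  have hid : List.ofFn (fun i : Fin n => (i : ℕ) + 1) = List.range' 1 n := by
    apply List.ext_getElem <;> simp [add_comm]
  exact hid ▸ σ.ofFn_comp_perm (fun i : Fin n => (i : ℕ) + 1)

/-- `σ ∈ S_n` is a skew permutation iff for every `i`, `σ(i)` is the
minimum or the maximum of `{σ(i), σ(i+1), …, σ(n)}`. -/
theorem skew_permutation_characterization (n : ℕ) (σ : Equiv.Perm (Fin n)) :
    IsSkewPerm n σ ↔
      ∀ i : Fin n, (∀ j : Fin n, i ≤ j → σ i ≤ σ j) ∨ (∀ j : Fin n, i ≤ j → σ j ≤ σ i) := by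
  have hcond : (List.ofFn fun i => (σ i : ℕ) + 1).SuffixExtremal ↔
      ∀ i : Fin n, (∀ j : Fin n, i ≤ j → σ i ≤ σ j) ∨ (∀ j : Fin n, i ≤ j → σ j ≤ σ i) := by
    simp only [List.suffixExtremal_ofFn_iff, add_le_add_iff_right, Fin.val_fin_le]
  rw [← hcond]
  constructor
  · rintro ⟨T, -, hskew, hT⟩
    exact hT ▸ hskew.suffixExtremal_preorderAux 0
  · intro h
    obtain ⟨T, hskew, hint, hT⟩ :=
      FBT.exists_skew_preorderAux_eq σ.ofFn_val_add_one_perm_range' h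
    exact ⟨T, hint, hskew, hT⟩
end

section
/- A transposition δ_{i,j,k} is a tree transposition if and only if it is a 1-transposition (that is, j = i+1 or k = j+1). -/
/-!
A rotation at a node `x` whose left child is `y` (or the inverse rotation) exchanges, in the
pre-order, the single entry `x` with the adjacent block formed by `y` and its left subtree, so
tree permutations at rotation distance one differ by a 1-transposition. On a list without
repetitions a transposition `δ_{i,j,k}` is determined by its effect (the first moved position is
`i`, the last is `k - 1`, and position `i` receives the entry at `j`), so a tree transposition is
that 1-transposition. Conversely, every 1-transposition is realised by such a rotation at the end
of a right spine of length `i - 1`.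
-/

namespace FBT

theorem length_preorderAux : ∀ (T : FBT) (off : ℕ), (T.preorderAux off).length = T.internal
  | leaf, _ => rfl
  | node l r, off => by
      simp [preorderAux, internal, length_preorderAux l, length_preorderAux r]

theorem mem_preorderAux_bounds :
    ∀ {T : FBT} {off x : ℕ}, x ∈ T.preorderAux off → off < x ∧ x ≤ off + T.internal
  | leaf, _, _, h => by simp [preorderAux] at h
  | node l r, off, x, h => by
      simp only [preorderAux, List.mem_cons, List.mem_append] at h
      rcases h with rfl | h | h
      · simp only [internal]; omega
      · have := mem_preorderAux_bounds h; simp only [internal]; omega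
      · have := mem_preorderAux_bounds h; simp only [internal]; omega

theorem nodup_preorderAux : ∀ (T : FBT) (off : ℕ), (T.preorderAux off).Nodup
  | leaf, _ => List.nodup_nil
  | node l r, off => by
      rw [preorderAux, List.nodup_cons, List.nodup_append]
      refine ⟨fun hmem => ?_, nodup_preorderAux l off, nodup_preorderAux r _,
        fun a ha b hb => ?_⟩
      · rcases List.mem_append.1 hmem with h | h
        · have := mem_preorderAux_bounds h; omega
        · have := mem_preorderAux_bounds h; omega
      · have := mem_preorderAux_bounds ha
        have := mem_preorderAux_bounds hb
        omega

end FBT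

namespace Rot

theorem internal_eq {T1 T2 : FBT} (h : Rot T1 T2) : T1.internal = T2.internal := by
  induction h <;> simp only [FBT.internal, *] <;> omega

theorem symm {T1 T2 : FBT} (h : Rot T1 T2) : Rot T2 T1 := by
  induction h with
  | rotR C D E => exact rotL C D E
  | rotL C D E => exact rotR C D E
  | congrL r _ ih => exact congrL r ih
  | congrR l _ ih => exact congrR l ih

theorem ne {T1 T2 : FBT} (h : Rot T1 T2) : T1 ≠ T2 := by
  induction h with
  | rotR C D E =>
      intro h
      have := congrArg FBT.internal (FBT.node.inj h).1
      simp only [FBT.internal] at this; omega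
  | rotL C D E =>
      intro h
      have := congrArg FBT.internal (FBT.node.inj h).2
      simp only [FBT.internal] at this; omega
  | congrL r _ ih => exact fun h => ih (FBT.node.inj h).1
  | congrR l _ ih => exact fun h => ih (FBT.node.inj h).2

end Rot

theorem rotDist_eq_one_iff {T1 T2 : FBT} : rotDist T1 T2 = 1 ↔ Rot T1 T2 := by
  have chain_one : RotChain 1 T1 T2 ↔ Rot T1 T2 := by
    simp [RotChain, RotChainP]
  constructor
  · intro h
    have hne : {k | RotChain k T1 T2}.Nonempty :=
      Nat.nonempty_of_pos_sInf (by unfold rotDist at h; omega)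
    have := Nat.sInf_mem hne
    rw [← rotDist, h] at this
    exact chain_one.1 this
  · intro h
    refine le_antisymm (Nat.sInf_le (chain_one.2 h)) (Nat.one_le_iff_ne_zero.2 fun h0 => ?_)
    rcases Nat.sInf_eq_zero.1 h0 with h0 | h0
    · exact h.ne h0
    · exact (Set.eq_empty_iff_forall_notMem.1 h0 1) (chain_one.2 h)

def BlockSwap (p a b : ℕ) (σ τ : List ℕ) : Prop :=
  ∃ P A B S : List ℕ, P.length = p ∧ A.length = a ∧ B.length = b ∧
    σ = P ++ A ++ B ++ S ∧ τ = P ++ B ++ A ++ S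

namespace BlockSwap

variable {p a b : ℕ} {σ τ : List ℕ}

theorem symm (h : BlockSwap p a b σ τ) : BlockSwap p b a τ σ := by
  obtain ⟨P, A, B, S, hP, hA, hB, rfl, rfl⟩ := h
  exact ⟨P, B, A, S, hP, hB, hA, rfl, rfl⟩

theorem append_append (L R : List ℕ) (h : BlockSwap p a b σ τ) :
    BlockSwap (L.length + p) a b (L ++ σ ++ R) (L ++ τ ++ R) := by
  obtain ⟨P, A, B, S, rfl, hA, hB, rfl, rfl⟩ := h
  exact ⟨L ++ P, A, B, S ++ R, by simp, hA, hB, by simp, by simp⟩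

theorem add_le_length (h : BlockSwap p a b σ τ) : p + a + b ≤ σ.length := by
  obtain ⟨P, A, B, S, rfl, rfl, rfl, rfl, -⟩ := h
  simp only [List.length_append]
  omega

theorem transposeList_eq (h : BlockSwap p a b σ τ) :
    transposeList (p + 1) (p + a + 1) (p + a + b + 1) σ = τ := by
  obtain ⟨P, A, B, S, rfl, rfl, rfl, rfl, rfl⟩ := h
  rw [transposeList, Nat.add_sub_cancel, Nat.add_sub_cancel, Nat.add_sub_cancel,
    Nat.add_sub_add_right, Nat.add_sub_cancel_left, Nat.add_sub_add_right, Nat.add_sub_cancel_left]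
  simp [List.drop_append, List.drop_eq_nil_of_le, Nat.add_assoc]

end BlockSwap

theorem blockSwap_preorderAux_rotR (C D E : FBT) (off : ℕ) :
    BlockSwap 0 1 (C.internal + 1) ((FBT.node (FBT.node C D) E).preorderAux off)
      ((FBT.node C (FBT.node D E)).preorderAux off) := by
  refine ⟨[], [off + C.internal + D.internal + 2], (off + C.internal + 1) :: C.preorderAux off,
    D.preorderAux (off + C.internal + 1) ++ E.preorderAux (off + C.internal + D.internal + 2),
    rfl, rfl, by simp [FBT.length_preorderAux], ?_, ?_⟩ <;>
  simp only [FBT.preorderAux, FBT.internal, List.nil_append, List.cons_append,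
    List.append_assoc] <;>
  grind

theorem Rot.exists_blockSwap {T1 T2 : FBT} (h : Rot T1 T2) (off : ℕ) :
    ∃ p a b, 0 < a ∧ 0 < b ∧ (a = 1 ∨ b = 1) ∧
      BlockSwap p a b (T1.preorderAux off) (T2.preorderAux off) := by
  induction h generalizing off with
  | rotR C D E => exact ⟨0, 1, _, one_pos, by omega, Or.inl rfl, blockSwap_preorderAux_rotR ..⟩
  | rotL C D E =>
      exact ⟨0, _, 1, by omega, one_pos, Or.inr rfl, (blockSwap_preorderAux_rotR ..).symm⟩
  | @congrL l l' r hrot ih =>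
      obtain ⟨p, a, b, ha, hb, hab, hswap⟩ := ih off
      refine ⟨1 + p, a, b, ha, hb, hab, ?_⟩
      have := hswap.append_append [off + l.internal + 1] (r.preorderAux (off + l.internal + 1))
      simpa [FBT.preorderAux, hrot.internal_eq] using this
  | @congrR r r' l _ ih =>
      obtain ⟨p, a, b, ha, hb, hab, hswap⟩ := ih (off + l.internal + 1)
      refine ⟨l.internal + 1 + p, a, b, ha, hb, hab, ?_⟩
      have := hswap.append_append ((off + l.internal + 1) :: l.preorderAux off) []
      simpa [FBT.preorderAux, FBT.length_preorderAux] using this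

theorem rightComb_internal : ∀ n : ℕ, (rightComb n).internal = n
  | 0 => rfl
  | n + 1 => by simp [rightComb, FBT.internal, rightComb_internal n]

theorem exists_rot_blockSwap (p b s : ℕ) :
    ∃ T1 T2 : FBT, Rot T1 T2 ∧ T1.internal = p + b + s + 2 ∧
      ∀ off, BlockSwap p 1 (b + 1) (T1.preorderAux off) (T2.preorderAux off) := by
  induction p with
  | zero =>
      refine ⟨_, _, Rot.rotR (rightComb b) FBT.leaf (rightComb s), ?_, fun off => ?_⟩
      · simp only [FBT.internal, rightComb_internal]; omega
      · simpa [rightComb_internal] using blockSwap_preorderAux_rotR (rightComb b) .leaf _ off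
  | succ p ih =>
      obtain ⟨T1, T2, hrot, hT1, hswap⟩ := ih
      refine ⟨.node .leaf T1, .node .leaf T2, hrot.congrR _, ?_, fun off => ?_⟩
      · simp only [FBT.internal]; omega
      · have := (hswap (off + 1)).append_append [off + 1] []
        simpa [FBT.preorderAux, FBT.internal, Nat.add_comm 1 p] using this

section TransposeListEntries

variable {l : List ℕ} {i j k : ℕ}

theorem getElem?_transposeList_of_lt (hij : i < j) (hjk : j < k) (hk : k ≤ l.length + 1)
    {q : ℕ} (hq : q < i - 1) : (transposeList i j k l)[q]? = l[q]? := by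
  simp only [transposeList, List.append_assoc, List.getElem?_append, List.length_take,
    lt_inf_iff, List.getElem?_take, List.length_drop, List.getElem?_drop]
  grind

theorem getElem?_transposeList_of_ge (hi : 1 ≤ i) (hij : i < j) (hjk : j < k)
    (hk : k ≤ l.length + 1) {q : ℕ} (hq : k - 1 ≤ q) : (transposeList i j k l)[q]? = l[q]? := by
  simp only [transposeList, List.append_assoc, List.getElem?_append, List.length_take,
    lt_inf_iff, List.getElem?_take, List.length_drop, List.getElem?_drop]
  grind

theorem getElem?_transposeList_first (hi : 1 ≤ i) (hij : i < j) (hjk : j < k)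
    (hk : k ≤ l.length + 1) : (transposeList i j k l)[i - 1]? = l[j - 1]? := by
  simp only [transposeList, List.append_assoc, List.getElem?_append, List.length_take,
    lt_inf_iff, List.getElem?_take, List.length_drop, List.getElem?_drop]
  grind

theorem getElem?_transposeList_last (hi : 1 ≤ i) (hij : i < j) (hjk : j < k)
    (hk : k ≤ l.length + 1) : (transposeList i j k l)[k - 2]? = l[j - 2]? := by
  simp only [transposeList, List.append_assoc, List.getElem?_append, List.length_take,
    lt_inf_iff, List.getElem?_take, List.length_drop, List.getElem?_drop]
  grind

end TransposeListEntries

section TransposeListUnique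

variable {l : List ℕ} {i j k i' j' k' : ℕ}

theorem start_le_of_transposeList_eq (hl : l.Nodup)
    (hi : 1 ≤ i) (hij : i < j) (hjk : j < k) (hk : k ≤ l.length + 1)
    (hij' : i' < j') (hjk' : j' < k') (hk' : k' ≤ l.length + 1)
    (h : transposeList i j k l = transposeList i' j' k' l) : i' ≤ i := by
  by_contra! hlt
  have hfirst := getElem?_transposeList_first hi hij hjk hk
  rw [h, getElem?_transposeList_of_lt hij' hjk' hk' (by omega)] at hfirst
  have := (List.getElem?_inj (by omega) hl).1 hfirst
  omega

theorem end_le_of_transposeList_eq (hl : l.Nodup)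
    (hi : 1 ≤ i) (hij : i < j) (hjk : j < k) (hk : k ≤ l.length + 1)
    (hi' : 1 ≤ i') (hij' : i' < j') (hjk' : j' < k') (hk' : k' ≤ l.length + 1)
    (h : transposeList i j k l = transposeList i' j' k' l) : k' ≤ k := by
  by_contra! hlt
  have hlast := getElem?_transposeList_last hi' hij' hjk' hk'
  rw [← h, getElem?_transposeList_of_ge hi hij hjk hk (by omega)] at hlast
  have := (List.getElem?_inj (by omega) hl).1 hlast
  omega

theorem eq_of_transposeList_eq (hl : l.Nodup)
    (hi : 1 ≤ i) (hij : i < j) (hjk : j < k) (hk : k ≤ l.length + 1)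
    (hi' : 1 ≤ i') (hij' : i' < j') (hjk' : j' < k') (hk' : k' ≤ l.length + 1)
    (h : transposeList i j k l = transposeList i' j' k' l) : i = i' ∧ j = j' ∧ k = k' := by
  obtain rfl : i = i' := le_antisymm
    (start_le_of_transposeList_eq hl hi' hij' hjk' hk' hij hjk hk h.symm)
    (start_le_of_transposeList_eq hl hi hij hjk hk hij' hjk' hk' h)
  refine ⟨rfl, ?_, le_antisymm
    (end_le_of_transposeList_eq hl hi' hij' hjk' hk' hi hij hjk hk h.symm)
    (end_le_of_transposeList_eq hl hi hij hjk hk hi' hij' hjk' hk' h)⟩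
  have hfirst := getElem?_transposeList_first hi hij hjk hk
  rw [h, getElem?_transposeList_first hi' hij' hjk' hk'] at hfirst
  have := (List.getElem?_inj (by omega) hl).1 hfirst.symm
  omega

end TransposeListUnique

/-- a transposition `δ_{i,j,k}` is a tree transposition iff it is a
1-transposition, i.e. `j = i+1` or `k = j+1`. -/
theorem tree_transposition_iff_one_transposition (n i j k : ℕ)
    (hi : 1 ≤ i) (hij : i < j) (hjk : j < k) (hk : k ≤ n + 1) :
    IsTreeTransposition n i j k ↔ (j = i + 1 ∨ k = j + 1) := by
  constructor
  · rintro ⟨T1, T2, hT1, -, hdist, hσ⟩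
    obtain ⟨p, a, b, ha, hb, hab, hswap⟩ := (rotDist_eq_one_iff.1 hdist).exists_blockSwap 0
    have hlen : (T1.preorderAux 0).length = n := by rw [FBT.length_preorderAux, hT1]
    have := hswap.add_le_length
    obtain ⟨rfl, rfl, rfl⟩ := eq_of_transposeList_eq (T1.nodup_preorderAux 0)
      hi hij hjk (by omega) (by omega) (by omega) (by omega) (by omega)
      (hσ.trans hswap.transposeList_eq.symm)
    omega
  · rintro (rfl | rfl)
    · obtain ⟨T1, T2, hrot, hT1, hswap⟩ := exists_rot_blockSwap (i - 1) (k - i - 2) (n + 1 - k)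
      refine ⟨T1, T2, by omega, by rw [← hrot.internal_eq]; omega,
        rotDist_eq_one_iff.2 hrot, ?_⟩
      convert (hswap 0).transposeList_eq using 2 <;> omega
    · obtain ⟨T1, T2, hrot, hT1, hswap⟩ := exists_rot_blockSwap (i - 1) (j - i - 1) (n - j)
      refine ⟨T2, T1, by rw [← hrot.internal_eq]; omega, by omega,
        rotDist_eq_one_iff.2 hrot.symm, ?_⟩
      convert (hswap 0).symm.transposeList_eq using 2 <;> omega
end

section
/- For any full binary tree T with n internal nodes and rank r ≥ 2, there is a sequence of at most 2n³ + n² rotations transforming T into a full binary tree of rank r − 1 such that every intermediate tree obtained in the sequence has rank at most r. -/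
/-!
Every tree of rank at most `R` can be rotated into the right comb through trees of rank at
most `R`: rotate right at the root until the left child is a leaf, then recurse into the right
subtree. The only right rotation at the root that raises the rank is the one on `((C, D), E)`
with `rank C = R` and `rank D = rank E = R - 1`; there one first rotates inside `C` until its
left child is a leaf, after which two harmless rotations lift that leaf to the root. Making the
left child a leaf costs at most `n` rotations, so reaching the comb costs at most `n²`.

Since `2 ^ (r - 1) ≤ n + 1`, some tree `T'` with `n` internal nodes has rank `r - 1`. Rotating
`T` into the comb and then the comb back into `T'` (reversing the chain for `T'`, whose trees have
rank at most `r - 1`) takes at most `2n² ≤ 2n³ + n²` rotations.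
-/

namespace FBT

def leftPath : FBT → ℕ
  | leaf => 0
  | node l _ => leftPath l + 1

theorem leftPath_le_internal : ∀ T : FBT, T.leftPath ≤ T.internal
  | leaf => le_rfl
  | node l _ => by have := leftPath_le_internal l; simp only [leftPath, internal]; omega

theorem two_pow_rank_le_internal_add_one : ∀ T : FBT, 2 ^ T.rank ≤ T.internal + 1
  | leaf => le_rfl
  | node l r => by
    have hl := two_pow_rank_le_internal_add_one l
    have hr := two_pow_rank_le_internal_add_one r
    simp only [rank, internal]
    split_ifs with h
    · rw [pow_succ]; rw [← h] at hr; omega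
    · rcases le_total l.rank r.rank with h' | h'
      · rw [max_eq_right h']; omega
      · rw [max_eq_left h']; omega

theorem rank_node_le_of_le_of_lt {l r : FBT} {R : ℕ} (hl : l.rank ≤ R) (hr : r.rank < R) :
    (node l r).rank ≤ R := by
  simp only [rank]; split_ifs <;> omega

theorem rank_node_le_of_lt_of_le {l r : FBT} {R : ℕ} (hl : l.rank < R) (hr : r.rank ≤ R) :
    (node l r).rank ≤ R := by
  simp only [rank]; split_ifs <;> omega

theorem rank_le_rank_node_right (l r : FBT) : r.rank ≤ (node l r).rank := by
  simp only [rank]; split_ifs <;> omega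

theorem rank_node_pos (l r : FBT) : 0 < (node l r).rank := by
  simp only [rank]; split_ifs <;> omega

theorem rank_node_leaf {T : FBT} (hT : 0 < T.rank) : (node leaf T).rank = T.rank := by
  simp [rank, hT.ne]

theorem rank_rotR_le {C D E : FBT} {R : ℕ} (h : (node (node C D) E).rank ≤ R)
    (hbad : ¬(C.rank = R ∧ D.rank + 1 = R ∧ E.rank + 1 = R)) :
    (node C (node D E)).rank ≤ R := by
  simp only [rank] at h ⊢
  split_ifs at h ⊢ <;> omega

theorem rank_completeTree : ∀ s : ℕ, (completeTree s).rank = s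
  | 0 => rfl
  | s + 1 => by simp [completeTree, rank, rank_completeTree s]

theorem internal_completeTree : ∀ s : ℕ, (completeTree s).internal + 1 = 2 ^ s
  | 0 => rfl
  | s + 1 => by
    have := internal_completeTree s
    simp only [completeTree, internal, pow_succ]; omega

/-- Hang the complete tree of height `s` below a right spine of the appropriate length. -/
theorem exists_internal_eq_rank_eq {s : ℕ} (hs : 0 < s) :
    ∀ n : ℕ, 2 ^ s ≤ n + 1 → ∃ T : FBT, T.internal = n ∧ T.rank = s
  | 0, h => absurd h (by simpa using Nat.one_lt_two_pow hs.ne')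
  | n + 1, h => by
    by_cases hn : 2 ^ s = n + 2
    · exact ⟨completeTree s, by have := internal_completeTree s; omega, rank_completeTree s⟩
    · obtain ⟨T, hTn, hTs⟩ := exists_internal_eq_rank_eq hs n (by omega)
      exact ⟨node leaf T, by simp [internal, hTn], by rw [rank_node_leaf (hTs ▸ hs), hTs]⟩

end FBT

namespace Rot

theorem internal_eq_s12 {a b : FBT} (h : Rot a b) : a.internal = b.internal := by
  induction h <;> simp only [FBT.internal] at * <;> omega

theorem symm_s12 {a b : FBT} (h : Rot a b) : Rot b a := by
  induction h with
  | rotR C D E => exact rotL C D E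
  | rotL C D E => exact rotR C D E
  | congrL r _ ih => exact congrL r ih
  | congrR l _ ih => exact congrR l ih

end Rot

namespace RotChainP

variable {P Q : FBT → Prop}

theorem single {a b : FBT} (h : Rot a b) (hb : P b) : RotChainP P 1 a b :=
  ⟨b, h, hb, rfl⟩

theorem trans {k₁ k₂ : ℕ} {a b c : FBT} (h₁ : RotChainP P k₁ a b)
    (h₂ : RotChainP P k₂ b c) : RotChainP P (k₁ + k₂) a c := by
  induction k₁ generalizing a with
  | zero => cases h₁; simpa using h₂
  | succ k ih =>
    obtain ⟨t, hrot, hp, hch⟩ := h₁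
    rw [Nat.add_right_comm]
    exact ⟨t, hrot, hp, ih hch⟩

theorem last {k : ℕ} {a b : FBT} (h : RotChainP P k a b) (ha : P a) : P b := by
  induction k generalizing a with
  | zero => cases h; exact ha
  | succ k ih => obtain ⟨t, _, hp, hch⟩ := h; exact ih hch hp

theorem internal_eq_s12 {k : ℕ} {a b : FBT} (h : RotChainP P k a b) : a.internal = b.internal := by
  induction k generalizing a with
  | zero => cases h; rfl
  | succ k ih => obtain ⟨t, hrot, _, hch⟩ := h; exact hrot.internal_eq_s12.trans (ih hch)

theorem reverse {k : ℕ} {a b : FBT} (h : RotChainP P k a b) (ha : P a) : RotChainP P k b a := by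
  induction k generalizing a with
  | zero => cases h; rfl
  | succ k ih =>
    obtain ⟨t, hrot, hp, hch⟩ := h
    simpa using (ih hch hp).trans (single hrot.symm_s12 ha)

theorem map {k : ℕ} {a b : FBT} (f : FBT → FBT) (hf : ∀ {x y}, Rot x y → Rot (f x) (f y))
    (hPQ : ∀ S, P S → Q (f S)) (h : RotChainP P k a b) : RotChainP Q k (f a) (f b) := by
  induction k generalizing a with
  | zero => cases h; rfl
  | succ k ih =>
    obtain ⟨t, hrot, hp, hch⟩ := h
    exact ⟨f t, hf hrot, hPQ t hp, ih hch⟩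

end RotChainP

open FBT

theorem exists_rotChainP_node_leaf {R : ℕ} :
    ∀ A B : FBT, (node A B).rank ≤ R → ∃ (k : ℕ) (B' : FBT), k ≤ A.leftPath ∧
      RotChainP (fun S => S.rank ≤ R) k (node A B) (node leaf B')
  | leaf, B, _ => ⟨0, B, le_rfl, rfl⟩
  | node C D, B, h => by
    by_cases hbad : C.rank = R ∧ D.rank + 1 = R ∧ B.rank + 1 = R
    · obtain ⟨hC, hD, hB⟩ := hbad
      obtain ⟨C₁, C₂, rfl⟩ : ∃ C₁ C₂, C = node C₁ C₂ := by
        cases C with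
        | leaf => simp only [rank] at hC; omega
        | node C₁ C₂ => exact ⟨C₁, C₂, rfl⟩
      obtain ⟨k, C', hk, hch⟩ := exists_rotChainP_node_leaf C₁ C₂ hC.le
      have hC' : C'.rank ≤ R := (rank_le_rank_node_right _ _).trans (hch.last hC.le)
      have hC'D : (node C' D).rank ≤ R := rank_node_le_of_le_of_lt hC' (by omega)
      have hleaf : leaf.rank < R := by simp only [rank]; omega
      have hliftD := hch.map (Q := fun S => S.rank ≤ R) (node · D) (.congrL D)
        fun S hS => rank_node_le_of_le_of_lt hS (by omega)
      have hlift := hliftD.map (Q := fun S => S.rank ≤ R) (node · B) (.congrL B)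
        fun S hS => rank_node_le_of_le_of_lt hS (by omega)
      refine ⟨k + 2, node (node C' D) B, by simp only [leftPath]; omega,
        hlift.trans ((RotChainP.single (.congrL B (.rotR leaf C' D)) ?_).trans
          (RotChainP.single (.rotR leaf (node C' D) B) ?_))⟩
      · exact rank_node_le_of_le_of_lt (rank_node_le_of_lt_of_le hleaf hC'D) (by omega)
      · exact rank_node_le_of_lt_of_le hleaf (rank_node_le_of_le_of_lt hC'D (by omega))
    · have hrot := rank_rotR_le h hbad
      obtain ⟨k, B', hk, hch⟩ := exists_rotChainP_node_leaf C (node D B) hrot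
      exact ⟨1 + k, B', by simp only [leftPath]; omega,
        (RotChainP.single (.rotR C D B) hrot).trans hch⟩
termination_by A => A.leftPath
decreasing_by all_goals subst_vars; simp only [leftPath]; omega

theorem exists_rotChainP_rightComb {R : ℕ} : ∀ T : FBT, T.rank ≤ R →
    ∃ k ≤ T.internal ^ 2, RotChainP (fun S => S.rank ≤ R) k T (rightComb T.internal)
  | leaf, _ => ⟨0, le_rfl, rfl⟩
  | node A B, h => by
    obtain ⟨k₁, B', hk₁, hch₁⟩ := exists_rotChainP_node_leaf A B h
    have hB' : B'.internal = A.internal + B.internal := by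
      have := hch₁.internal_eq_s12; simp only [internal] at this; omega
    obtain ⟨k₂, hk₂, hch₂⟩ := exists_rotChainP_rightComb B'
      ((rank_le_rank_node_right _ _).trans (hch₁.last h))
    have hleaf : leaf.rank < R := (rank_node_pos A B).trans_le h
    have hlift := hch₂.map (Q := fun S => S.rank ≤ R) (node leaf ·) (.congrR leaf)
      fun S hS => rank_node_le_of_lt_of_le hleaf hS
    rw [hB'] at hk₂ hlift
    refine ⟨k₁ + k₂, ?_, hch₁.trans hlift⟩
    have := leftPath_le_internal A
    simp only [internal]
    nlinarith
termination_by T => T.internal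
decreasing_by simp only [internal]; omega

/-- any full binary tree `T` with `n` internal nodes and rank `r ≥ 2`
can be transformed into a tree of rank `r - 1` using at most `2n³ + n²` rotations,
with every intermediate tree of rank at most `r`. -/
theorem reduce_rank_by_one (n r : ℕ) (T : FBT)
    (hn : T.internal = n) (hr : T.rank = r) (h2 : 2 ≤ r) :
    ∃ (k : ℕ) (T' : FBT), k ≤ 2 * n ^ 3 + n ^ 2 ∧ T'.rank = r - 1 ∧
      RotChainP (fun S => S.rank ≤ r) k T T' := by
  subst hn hr
  have hpow : 2 ^ (T.rank - 1) ≤ T.internal + 1 :=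
    (Nat.pow_le_pow_right two_pos (Nat.sub_le _ _)).trans (two_pow_rank_le_internal_add_one T)
  obtain ⟨T', hT'n, hT'r⟩ := exists_internal_eq_rank_eq (by omega) T.internal hpow
  obtain ⟨k₁, hk₁, hch₁⟩ := exists_rotChainP_rightComb T le_rfl
  obtain ⟨k₂, hk₂, hch₂⟩ := exists_rotChainP_rightComb T' (R := T.rank) (by omega)
  rw [hT'n] at hk₂ hch₂
  refine ⟨k₁ + k₂, T', ?_, hT'r, hch₁.trans (hch₂.reverse (by omega))⟩
  have hsq : T.internal ^ 2 ≤ T.internal ^ 3 := by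
    rcases T.internal.eq_zero_or_pos with h | h
    · simp [h]
    · exact Nat.pow_le_pow_right h (by norm_num)
  omega
end

section
/- For every n ≥ 1, the right comb and the left comb on n internal nodes each are full skew trees whose skew rotation distance is at least n(n−1)/2. -/
/-!
Let `φ(T)` be the sum, over the internal nodes of `T`, of the number of internal nodes in their
left subtree. It vanishes on the right comb and equals `n(n-1)/2` on the left comb. A left
rotation `C (D E) ↦ (C D) E` raises `φ` by `|C| + 1` and a right rotation lowers it; in a skew
tree the left child `C` of a node whose right child is internal is a leaf, so each rotation
starting from a skew tree raises `φ` by at most one.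
-/

namespace FBT

def leftWeight : FBT → ℕ
  | leaf => 0
  | node l r => leftWeight l + leftWeight r + internal l

theorem skew_rightComb (n : ℕ) : (rightComb n).skew := by
  induction n with
  | zero => trivial
  | succ n ih => exact ⟨Or.inl rfl, trivial, ih⟩

theorem skew_leftComb (n : ℕ) : (leftComb n).skew := by
  induction n with
  | zero => trivial
  | succ n ih => exact ⟨Or.inr rfl, ih, trivial⟩

theorem internal_leftComb (n : ℕ) : (leftComb n).internal = n := by
  induction n with
  | zero => rfl
  | succ n ih => simp [leftComb, internal, ih]

theorem leftWeight_rightComb (n : ℕ) : (rightComb n).leftWeight = 0 := by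
  induction n with
  | zero => rfl
  | succ n ih => simp [rightComb, leftWeight, internal, ih]

theorem leftWeight_leftComb (n : ℕ) : (leftComb n).leftWeight = n.choose 2 := by
  induction n with
  | zero => rfl
  | succ n ih =>
    simp [leftComb, leftWeight, internal_leftComb, ih, Nat.choose_succ_succ', add_comm]

theorem internal_eq_of_rot {T T' : FBT} (h : Rot T T') : T'.internal = T.internal := by
  induction h with
  | rotR | rotL => simp only [internal]; omega
  | congrL _ _ ih | congrR _ _ ih => simp [internal, ih]

theorem leftWeight_le_of_rot {T T' : FBT} (h : Rot T T') (hT : T.skew) :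
    T'.leftWeight ≤ T.leftWeight + 1 := by
  induction h with
  | rotR => simp only [leftWeight, internal]; omega
  | rotL C D E =>
    obtain rfl : C = leaf := hT.1.resolve_right FBT.noConfusion
    simp only [leftWeight, internal]; omega
  | congrL _ hr ih =>
    have := ih hT.2.1
    simp only [leftWeight, internal_eq_of_rot hr]; omega
  | congrR _ _ ih =>
    have := ih hT.2.2
    simp only [leftWeight]; omega

theorem leftWeight_le_of_rotChainP_skew {k : ℕ} {T₁ T₂ : FBT} (hT₁ : T₁.skew)
    (h : RotChainP skew k T₁ T₂) : T₂.leftWeight ≤ T₁.leftWeight + k := by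
  induction k generalizing T₁ with
  | zero => cases h; simp
  | succ k ih =>
    obtain ⟨T, hrot, hT, hchain⟩ := h
    have := leftWeight_le_of_rot hrot hT₁
    have := ih hT hchain
    omega

end FBT

theorem combs_skew_rotation_distance_lower_bound_general (n : ℕ) :
    (rightComb n).skew ∧ (leftComb n).skew ∧
    ∀ k : ℕ, RotChainP FBT.skew k (rightComb n) (leftComb n) → n * (n - 1) / 2 ≤ k := by
  refine ⟨FBT.skew_rightComb n, FBT.skew_leftComb n, fun k hchain => ?_⟩
  have h := FBT.leftWeight_le_of_rotChainP_skew (FBT.skew_rightComb n) hchain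
  rwa [FBT.leftWeight_leftComb, FBT.leftWeight_rightComb, zero_add, Nat.choose_two_right] at h

/-- for every `n ≥ 1`, the right comb and the left comb on `n` internal
nodes are full skew trees whose skew rotation distance is at least `n(n-1)/2`. -/
theorem combs_skew_rotation_distance_lower_bound (n : ℕ) (hn : 1 ≤ n) :
    (rightComb n).skew ∧ (leftComb n).skew ∧
    ∀ k : ℕ, RotChainP FBT.skew k (rightComb n) (leftComb n) → n * (n - 1) / 2 ≤ k :=
  combs_skew_rotation_distance_lower_bound_general n
end
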